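/- arXiv:math/0610488 — 3 statements merged into one kernel-verified Lean document; each statement's English description precedes it below -/
import Mathlib

section
/- Let p ≥ 3, s ≥ 1, and 1 ≤ e ≤ p − 1 be integers. Let v_0, …, v_{s−1} be integers with |v_j| ≤ e for all j, and suppose there exists some index j₀ with |v_{j₀}| ≤ e − 1. If ∑_{j=0}^{s−1} v_j p^j ≡ 0 (mod p^s − 1), then v_j = 0 for all j. -/
/-!
If every `|v j| ≤ e ≤ p - 1` and some `|v j₀| < e`, then
`|∑ v j p^j| < e (1 + p + ⋯ + p^(s-1)) ≤ p^s - 1`, so a multiple of `p^s - 1` must vanish;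
a vanishing sum of signed base-`p` digits of absolute value `< p` has all digits zero.
-/

open Finset

theorem Int.eq_zero_of_sum_mul_pow_eq_zero {p : ℤ} (hp : 1 < p) :
    ∀ {s : ℕ} {v : ℕ → ℤ}, (∀ j < s, |v j| < p) →
      ∑ j ∈ Finset.range s, v j * p ^ j = 0 → ∀ j < s, v j = 0
  | 0, _, _, _, _, hj => absurd hj (Nat.not_lt_zero _)
  | s + 1, v, hv, hsum, j, hj => by
    have hsplit : ∑ j ∈ Finset.range (s + 1), v j * p ^ j
        = (∑ j ∈ Finset.range s, v (j + 1) * p ^ j) * p + v 0 := by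
      rw [sum_range_succ', sum_mul]
      simp only [pow_succ, mul_assoc, pow_zero, mul_one]
    rw [hsplit] at hsum
    have hv0 : v 0 = 0 :=
      eq_zero_of_abs_lt_dvd ⟨-∑ j ∈ Finset.range s, v (j + 1) * p ^ j, by linarith⟩
        (hv 0 s.succ_pos)
    have htail : ∑ j ∈ Finset.range s, v (j + 1) * p ^ j = 0 := by
      rw [hv0, add_zero] at hsum
      exact (mul_eq_zero.mp hsum).resolve_right (by omega)
    cases j with
    | zero => exact hv0
    | succ j =>
      exact Int.eq_zero_of_sum_mul_pow_eq_zero hp (fun i hi => hv (i + 1) (by omega)) htail j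
        (by omega)

theorem abs_sum_mul_pow_lt {p e : ℤ} {s : ℕ} {v : ℕ → ℤ} (hp : 0 < p)
    (hv : ∀ j < s, |v j| ≤ e) (hj₀ : ∃ j₀ < s, |v j₀| < e) :
    |∑ j ∈ range s, v j * p ^ j| < e * ∑ j ∈ range s, p ^ j := by
  obtain ⟨j₀, hj₀s, hj₀⟩ := hj₀
  calc |∑ j ∈ range s, v j * p ^ j|
      ≤ ∑ j ∈ range s, |v j * p ^ j| := abs_sum_le_sum_abs _ _
    _ = ∑ j ∈ range s, |v j| * p ^ j := by
      simp only [abs_mul, abs_pow, abs_of_pos hp]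
    _ < ∑ j ∈ range s, e * p ^ j := by
      refine sum_lt_sum (fun j hj => ?_) ⟨j₀, mem_range.mpr hj₀s, ?_⟩
      · exact mul_le_mul_of_nonneg_right (hv j (mem_range.mp hj)) (pow_nonneg hp.le j)
      · exact mul_lt_mul_of_pos_right hj₀ (pow_pos hp j₀)
    _ = e * ∑ j ∈ range s, p ^ j := (mul_sum _ _ _).symm

theorem mul_geom_sum_le_pow_sub_one {p e : ℤ} (hp : 0 ≤ p) (hep : e ≤ p - 1) (s : ℕ) :
    e * ∑ j ∈ range s, p ^ j ≤ p ^ s - 1 := by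
  rw [← geom_sum_mul, mul_comm _ (p - 1)]
  exact mul_le_mul_of_nonneg_right hep (sum_nonneg fun j _ => pow_nonneg hp j)

theorem stmt_5_general (p e : ℤ) (s : ℕ) (hp : 3 ≤ p) (hep : e ≤ p - 1)
    (v : ℕ → ℤ) (hv : ∀ j < s, |v j| ≤ e)
    (hj0 : ∃ j₀ < s, |v j₀| ≤ e - 1)
    (hsum : (p ^ s - 1) ∣ ∑ j ∈ Finset.range s, v j * p ^ j) :
    ∀ j < s, v j = 0 := by
  have hj₀ : ∃ j₀ < s, |v j₀| < e := hj0.imp fun j h => ⟨h.1, by omega⟩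
  have hlt : |∑ j ∈ range s, v j * p ^ j| < p ^ s - 1 :=
    (abs_sum_mul_pow_lt (by omega) hv hj₀).trans_le
      (mul_geom_sum_le_pow_sub_one (by omega) hep s)
  exact Int.eq_zero_of_sum_mul_pow_eq_zero (by omega)
    (fun j hj => (hv j hj).trans_lt (by omega)) (Int.eq_zero_of_abs_lt_dvd hsum hlt)

theorem stmt_5 (p e : ℤ) (s : ℕ) (hp : 3 ≤ p) (hs : 1 ≤ s) (he : 1 ≤ e) (hep : e ≤ p - 1)
    (v : ℕ → ℤ) (hv : ∀ j < s, |v j| ≤ e)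
    (hj0 : ∃ j₀ < s, |v j₀| ≤ e - 1)
    (hsum : (p ^ s - 1) ∣ ∑ j ∈ Finset.range s, v j * p ^ j) :
    ∀ j < s, v j = 0 :=
  stmt_5_general p e s hp hep v hv hj0 hsum
end

section
/- Let p ≥ 2 and s ≥ 1 be integers. The subgroup of ℤ^s generated by the s cyclic shifts of the vector (p, 0, …, 0, −1), i.e. by the vectors p·e_i − e_{i+1 mod s} for 0 ≤ i ≤ s−1 (where e_i is the standard basis), equals the subgroup {(v_0, …, v_{s−1}) ∈ ℤ^s : ∑_{j=0}^{s−1} v_j p^j ≡ 0 (mod p^s − 1)}. -/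
/-!
Let `φ(v) = ∑ v_j p^j`. Since `p^s ≡ 1 (mod p^s - 1)`, the exponent `j` only matters modulo `s`,
so every generator `p e_i - e_{i+1}` has `φ ≡ 0`. Conversely, reading indices of `e_n` modulo `s`,
`e_{n+1} - p^{n+1} e_0 = p (e_n - p^n e_0) - (p e_n - e_{n+1})`, so by induction all
`e_n - p^n e_0` lie in the lattice; at `n = s` this gives `(p^s - 1) e_0`. Finally
`v = ∑ v_j (e_j - p^j e_0) + φ(v) e_0`.
-/

open Finset Fin.NatCast

namespace CyclicShiftLattice

variable (p : ℤ) (s : ℕ) [NeZero s]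

abbrev lattice : AddSubgroup (Fin s → ℤ) :=
  AddSubgroup.closure
    {w : Fin s → ℤ | ∃ i : Fin s, w = p • Pi.single i (1 : ℤ) - Pi.single (i + 1) (1 : ℤ)}

def powWeightedSum : (Fin s → ℤ) →+ ℤ where
  toFun v := ∑ j, v j * p ^ (j : ℕ)
  map_zero' := by simp
  map_add' v w := by simp only [Pi.add_apply, add_mul, sum_add_distrib]

omit [NeZero s] in
@[simp]
lemma powWeightedSum_single (j : Fin s) (a : ℤ) :
    powWeightedSum p s (Pi.single j a) = a * p ^ (j : ℕ) := by
  simp [powWeightedSum, Pi.single_apply]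

lemma pow_val_natCast_modEq (n : ℕ) :
    p ^ ((n : Fin s) : ℕ) ≡ p ^ n [ZMOD p ^ s - 1] := by
  have hps : p ^ s ≡ 1 [ZMOD p ^ s - 1] := Int.modEq_sub _ _
  calc p ^ ((n : Fin s) : ℕ) = 1 ^ (n / s) * p ^ (n % s) := by
        rw [Fin.val_natCast, one_pow, one_mul]
    _ ≡ (p ^ s) ^ (n / s) * p ^ (n % s) [ZMOD p ^ s - 1] := ((hps.pow _).symm.mul_right _)
    _ = p ^ n := by rw [← pow_mul, ← pow_add, Nat.div_add_mod]

lemma dvd_powWeightedSum_generator (i : Fin s) :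
    p ^ s - 1 ∣ powWeightedSum p s (p • Pi.single i (1 : ℤ) - Pi.single (i + 1) (1 : ℤ)) := by
  have hsucc : i + 1 = ((i + 1 : ℕ) : Fin s) := by rw [Nat.cast_succ, Fin.cast_val_eq_self]
  rw [map_sub, map_zsmul, powWeightedSum_single, powWeightedSum_single, hsucc, smul_eq_mul,
    one_mul, one_mul, ← pow_succ']
  exact (pow_val_natCast_modEq p s _).dvd

lemma lattice_le_comap :
    lattice p s ≤ (AddSubgroup.zmultiples (p ^ s - 1)).comap (powWeightedSum p s) := by
  rw [AddSubgroup.closure_le]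
  rintro _ ⟨i, rfl⟩
  exact Int.mem_zmultiples_iff.mpr (dvd_powWeightedSum_generator p s i)

lemma single_natCast_sub_mem_lattice (n : ℕ) :
    Pi.single (n : Fin s) (1 : ℤ) - p ^ n • Pi.single 0 (1 : ℤ) ∈ lattice p s := by
  induction n with
  | zero => simp
  | succ n ih =>
    have hgen :
        p • Pi.single (n : Fin s) (1 : ℤ) - Pi.single ((n : Fin s) + 1) (1 : ℤ) ∈ lattice p s :=
      AddSubgroup.subset_closure ⟨_, rfl⟩
    convert sub_mem (zsmul_mem ih p) hgen using 1
    rw [Nat.cast_succ, pow_succ']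
    module

lemma smul_single_zero_mem_lattice :
    (p ^ s - 1) • Pi.single (0 : Fin s) (1 : ℤ) ∈ lattice p s := by
  have h := neg_mem (single_natCast_sub_mem_lattice p s s)
  rw [Fin.natCast_self, neg_sub] at h
  rwa [sub_smul, one_smul]

omit [NeZero s] in
lemma eq_sum_add_powWeightedSum_smul (v : Fin s → ℤ) (i₀ : Fin s) :
    v = ∑ j, v j • (Pi.single j (1 : ℤ) - p ^ (j : ℕ) • Pi.single i₀ (1 : ℤ))
      + powWeightedSum p s v • Pi.single i₀ (1 : ℤ) := by
  have hv : ∑ j, v j • Pi.single j (1 : ℤ) = v := by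
    simp [← Pi.single_smul, Finset.univ_sum_single]
  simp only [smul_sub, smul_smul, sum_sub_distrib, hv, powWeightedSum, AddMonoidHom.coe_mk,
    ZeroHom.coe_mk, sum_smul]
  abel

lemma lattice_eq_comap :
    lattice p s = (AddSubgroup.zmultiples (p ^ s - 1)).comap (powWeightedSum p s) := by
  refine le_antisymm (lattice_le_comap p s) fun v hv => ?_
  obtain ⟨c, hc⟩ := Int.mem_zmultiples_iff.mp (AddSubgroup.mem_comap.mp hv)
  rw [eq_sum_add_powWeightedSum_smul p s v 0, hc, mul_comm, mul_smul]
  have hbasis (j : Fin s) : Pi.single j (1 : ℤ) - p ^ (j : ℕ) • Pi.single 0 1 ∈ lattice p s := by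
    simpa only [Fin.cast_val_eq_self] using single_natCast_sub_mem_lattice p s j
  exact add_mem (sum_mem fun j _ => zsmul_mem (hbasis j) _)
    (zsmul_mem (smul_single_zero_mem_lattice p s) c)

end CyclicShiftLattice

theorem stmt_6_general (p : ℤ) (s : ℕ) [NeZero s] (v : Fin s → ℤ) :
    v ∈ AddSubgroup.closure
        {w : Fin s → ℤ | ∃ i : Fin s, w = p • Pi.single i (1 : ℤ) - Pi.single (i + 1) (1 : ℤ)} ↔
      (p ^ s - 1) ∣ ∑ j, v j * p ^ (j : ℕ) := by
  rw [← CyclicShiftLattice.lattice, CyclicShiftLattice.lattice_eq_comap, AddSubgroup.mem_comap,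
    Int.mem_zmultiples_iff]
  rfl

theorem stmt_6 (p : ℤ) (s : ℕ) [NeZero s] (hp : 2 ≤ p) (v : Fin s → ℤ) :
    v ∈ AddSubgroup.closure
        {w : Fin s → ℤ | ∃ i : Fin s, w = p • Pi.single i (1 : ℤ) - Pi.single (i + 1) (1 : ℤ)} ↔
      (p ^ s - 1) ∣ ∑ j, v j * p ^ (j : ℕ) :=
  stmt_6_general p s v
end

section
/- Let p ≥ 2 and n ≥ 1 be integers, and let c_0, …, c_{n−1} be integers with −(p − 1) ≤ c_i ≤ 2(p − 1) for all i. Suppose ∑_{i=0}^{n−1} c_i p^i ≡ 0 (mod p^n − 1), that not all c_i equal −(p − 1), and that not all c_i equal 2(p − 1). Then c_i ∈ {−1, 0, p − 1, p} for every i. -/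
lemma aux13 (p : ℤ) (hp : 2 ≤ p) :
    ∀ (k : ℕ) (m t : ℤ), (m = 0 ∨ m = 1) → (t = 0 ∨ t = 1) →
    ∀ (d : ℕ → ℤ), (∀ j < k, -(p - 1) ≤ d j ∧ d j ≤ 2 * (p - 1)) →
    (∑ j ∈ Finset.range k, d j * p ^ j = m * p ^ k - t) →
    ∀ j < k, d j = -1 ∨ d j = 0 ∨ d j = p - 1 ∨ d j = p := by
  intro k
  induction k with
  | zero => intro m t _ _ d _ _ j hj; omega
  | succ k ih =>
    intro m t hm ht d hd hsum j hj
    set T : ℤ := ∑ j ∈ Finset.range k, d (j + 1) * p ^ j with hT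
    have hsplit : ∑ j ∈ Finset.range (k + 1), d j * p ^ j = d 0 + p * T := by
      rw [Finset.sum_range_succ' (fun j => d j * p ^ j) k, hT, Finset.mul_sum]
      have : ∀ x ∈ Finset.range k, d (x + 1) * p ^ (x + 1) = p * (d (x + 1) * p ^ x) := by
        intro x _; ring
      rw [Finset.sum_congr rfl this]; ring
    rw [hsplit] at hsum
    set s : ℤ := m * p ^ k - T with hs
    have hds : d 0 + t = p * s := by rw [hs]; linear_combination hsum
    have hb := hd 0 (by omega)
    have htb : 0 ≤ t ∧ t ≤ 1 := by omega
    have hs0 : 0 ≤ s := by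
      by_contra h
      have h1 : s ≤ -1 := by omega
      have h2 : p * s ≤ p * (-1) := mul_le_mul_of_nonneg_left h1 (by omega)
      omega
    have hs1 : s ≤ 1 := by
      by_contra h
      have h1 : (2:ℤ) ≤ s := by omega
      have h2 : p * 2 ≤ p * s := mul_le_mul_of_nonneg_left h1 (by omega)
      omega
    have hsv : s = 0 ∨ s = 1 := by omega
    have hTsum : T = m * p ^ k - s := by rw [hs]; ring
    rcases j with _ | j
    · rcases hsv with h | h <;> rcases ht with h' | h' <;> rw [h, h'] at hds <;> omega
    · have := ih m s hm hsv (fun j => d (j + 1))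
        (fun j hjk => hd (j + 1) (by omega)) hTsum j (by omega)
      exact this

theorem stmt_13 (p : ℤ) (n : ℕ) (hp : 2 ≤ p) (hn : 1 ≤ n) (c : ℕ → ℤ)
    (hc : ∀ i < n, -(p - 1) ≤ c i ∧ c i ≤ 2 * (p - 1))
    (hdvd : (p ^ n - 1) ∣ ∑ i ∈ Finset.range n, c i * p ^ i)
    (hne1 : ¬ ∀ i < n, c i = -(p - 1))
    (hne2 : ¬ ∀ i < n, c i = 2 * (p - 1)) :
    ∀ i < n, c i = -1 ∨ c i = 0 ∨ c i = p - 1 ∨ c i = p := by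
  obtain ⟨q, hq⟩ := hdvd
  have hg : ∑ i ∈ Finset.range n, (p - 1) * p ^ i = p ^ n - 1 := by
    have h := geom_sum_mul p n
    calc ∑ i ∈ Finset.range n, (p - 1) * p ^ i
        = (∑ i ∈ Finset.range n, p ^ i) * (p - 1) := by
          rw [Finset.sum_mul]; exact Finset.sum_congr rfl (fun i _ => by ring)
      _ = p ^ n - 1 := h
  have hpn : p ≤ p ^ n := le_self_pow₀ (by omega) (by omega)
  push_neg at hne1 hne2
  obtain ⟨i1, hi1, hci1⟩ := hne1
  obtain ⟨i2, hi2, hci2⟩ := hne2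
  have hlb : -(p ^ n - 1) < ∑ i ∈ Finset.range n, c i * p ^ i := by
    have h : ∑ i ∈ Finset.range n, -((p - 1) * p ^ i)
        < ∑ i ∈ Finset.range n, c i * p ^ i := by
      apply Finset.sum_lt_sum
      · intro i hi
        have := (hc i (Finset.mem_range.mp hi)).1
        have hp0 : (0:ℤ) ≤ p ^ i := pow_nonneg (by omega) i
        nlinarith
      · refine ⟨i1, Finset.mem_range.mpr hi1, ?_⟩
        have h1 := (hc i1 hi1).1
        have hlt : -(p - 1) < c i1 := lt_of_le_of_ne h1 (Ne.symm hci1)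
        have hp0 : (0:ℤ) < p ^ i1 := pow_pos (by omega) i1
        nlinarith
    rwa [Finset.sum_neg_distrib, hg] at h
  have hub : ∑ i ∈ Finset.range n, c i * p ^ i < 2 * (p ^ n - 1) := by
    have h : ∑ i ∈ Finset.range n, c i * p ^ i
        < ∑ i ∈ Finset.range n, 2 * ((p - 1) * p ^ i) := by
      apply Finset.sum_lt_sum
      · intro i hi
        have := (hc i (Finset.mem_range.mp hi)).2
        have hp0 : (0:ℤ) ≤ p ^ i := pow_nonneg (by omega) i
        nlinarith
      · refine ⟨i2, Finset.mem_range.mpr hi2, ?_⟩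
        have h2 := (hc i2 hi2).2
        have hlt : c i2 < 2 * (p - 1) := lt_of_le_of_ne h2 hci2
        have hp0 : (0:ℤ) < p ^ i2 := pow_pos (by omega) i2
        nlinarith
    rwa [← Finset.mul_sum, hg] at h
  rw [hq] at hlb hub
  have hq0 : 0 ≤ q := by nlinarith
  have hq1 : q ≤ 1 := by nlinarith
  have hqv : q = 0 ∨ q = 1 := by omega
  have hsum : ∑ i ∈ Finset.range n, c i * p ^ i = q * p ^ n - q := by
    rw [hq]; ring
  exact aux13 p hp n q q hqv hqv c hc hsum
end
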